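/- Let q be a prime power, F_q the finite field with q elements, and 1 ≤ t ≤ ℓ ≤ m integers with ℓ ≥ 2 (and t ≥ 1). Then the number of ℓ×m matrices M over F_q with rank M exactly t and M_{11} ≠ 0 equals (q−1) · q^{ℓ+m−2} · μ_{t−1}(ℓ−1, m−1). -/

import Mathlib

/-!
If the corner entry `a = M₁₁` is nonzero, write `M = [[a, B], [C, D]]`. The Schur complement
factorisation `M = [[1, 0], [C a⁻¹, 1]] · diag(a, D - C a⁻¹ B) · [[1, a⁻¹ B], [0, 1]]` has
unitriangular outer factors, so `rank M = 1 + rank (D - C a⁻¹ B)`. Hence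
`M ↦ (a, B, C, D - C a⁻¹ B)` is a bijection onto `Kˣ × K^(m-1) × K^(l-1) × {S : rank S = t - 1}`,
which has `(q - 1) q^(l+m-2) μ_{t-1}(l-1, m-1)` elements.
-/

open Finset Matrix

/-- `mu K a b t` is the number of `a × b` matrices over the field `K` of rank exactly `t`. -/
noncomputable def mu (K : Type) [Field K] [Fintype K] (a b t : ℕ) : ℕ :=
  Nat.card {M : Matrix (Fin a) (Fin b) K // M.rank = t}

namespace LinearMap

variable {K M₁ M₂ N₁ N₂ : Type*} [Field K] [AddCommGroup M₁] [AddCommGroup M₂]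
  [AddCommGroup N₁] [AddCommGroup N₂] [Module K M₁] [Module K M₂] [Module K N₁] [Module K N₂]
  [FiniteDimensional K N₁] [FiniteDimensional K N₂]

theorem finrank_range_prodMap (f : M₁ →ₗ[K] N₁) (g : M₂ →ₗ[K] N₂) :
    Module.finrank K (range (f.prodMap g)) =
      Module.finrank K (range f) + Module.finrank K (range g) := by
  have hfactor : f.prodMap g =
      (f.range.subtype.prodMap g.range.subtype) ∘ₗ (f.rangeRestrict.prodMap g.rangeRestrict) :=
    rfl
  rw [hfactor, range_comp_of_range_eq_top _ (by
      rw [range_prodMap, range_rangeRestrict, range_rangeRestrict, Submodule.prod_top]),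
    finrank_range_of_inj (Subtype.val_injective.prodMap Subtype.val_injective),
    Module.finrank_prod]

end LinearMap

namespace Matrix

variable {K : Type*} [Field K] {l m n o : Type*} [Fintype l] [Fintype m] [Fintype n] [Fintype o]

theorem rank_fromBlocks_zero₁₂_zero₂₁ (A : Matrix l n K) (D : Matrix m o K) :
    (fromBlocks A 0 0 D).rank = A.rank + D.rank := by
  have hconj : (LinearEquiv.sumArrowLequivProdArrow l m K K).toLinearMap ∘ₗ
      (fromBlocks A 0 0 D).mulVecLin =
      (A.mulVecLin.prodMap D.mulVecLin) ∘ₗ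
        (LinearEquiv.sumArrowLequivProdArrow n o K K).toLinearMap := by
    ext v : 1
    simp only [LinearMap.comp_apply, LinearEquiv.coe_coe, mulVecLin_apply, fromBlocks_mulVec,
      zero_mulVec, add_zero, zero_add]
    rfl
  have hrange := congrArg (fun f => Module.finrank K (LinearMap.range f)) hconj
  rw [LinearMap.range_comp, LinearEquiv.finrank_map_eq] at hrange
  rw [rank, hrange, LinearMap.range_comp_of_range_eq_top _ (LinearEquiv.range _),
    LinearMap.finrank_range_prodMap, rank, rank]

theorem natCard_matrix (α : Type*) :
    Nat.card (Matrix m n α) = Nat.card α ^ (Fintype.card m * Fintype.card n) := by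
  rw [← Nat.card_eq_fintype_card, ← Nat.card_eq_fintype_card, pow_mul', ← Nat.card_fun,
    ← Nat.card_fun]
  rfl

variable [DecidableEq l] [DecidableEq m] [DecidableEq n]

theorem rank_fromBlocks_of_isUnit₁₁ {A : Matrix m m K} (hA : IsUnit A) (B : Matrix m n K)
    (C : Matrix l m K) (D : Matrix l n K) :
    (fromBlocks A B C D).rank = Fintype.card m + (D - C * A⁻¹ * B).rank := by
  let _ : Invertible A := hA.invertible
  rw [fromBlocks_eq_of_invertible₁₁, rank_mul_eq_left_of_isUnit_det _ _ (by simp),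
    rank_mul_eq_right_of_isUnit_det _ _ (by simp), rank_fromBlocks_zero₁₂_zero₂₁,
    rank_of_isUnit A hA, invOf_eq_nonsing_inv]

noncomputable def equivSchurComplement (r : ℕ) :
    {N : Matrix (m ⊕ l) (m ⊕ n) K // N.rank = Fintype.card m + r ∧ IsUnit N.toBlocks₁₁} ≃
      (Matrix m m K)ˣ × Matrix m n K × Matrix l m K × {S : Matrix l n K // S.rank = r} where
  toFun N := (N.2.2.unit, N.1.toBlocks₁₂, N.1.toBlocks₂₁,
    ⟨N.1.toBlocks₂₂ - N.1.toBlocks₂₁ * N.1.toBlocks₁₁⁻¹ * N.1.toBlocks₁₂, by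
      have hrank := N.2.1
      rw [← fromBlocks_toBlocks N.1, rank_fromBlocks_of_isUnit₁₁ N.2.2] at hrank
      omega⟩)
  invFun := fun ⟨A, B, C, S⟩ => ⟨fromBlocks A B C (S.1 + C * (A : Matrix m m K)⁻¹ * B),
    by rw [rank_fromBlocks_of_isUnit₁₁ A.isUnit, add_sub_cancel_right, S.2],
    by simp⟩
  left_inv N := by
    ext : 1
    simp [fromBlocks_toBlocks]
  right_inv := by
    rintro ⟨A, B, C, S⟩
    dsimp only
    ext <;> simp

theorem card_rank_eq_card_add_of_isUnit_toBlocks₁₁ [Fintype K] (r : ℕ) :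
    Nat.card {N : Matrix (m ⊕ l) (m ⊕ n) K //
        N.rank = Fintype.card m + r ∧ IsUnit N.toBlocks₁₁} =
      Nat.card (GL m K) * Fintype.card K ^ (Fintype.card m * Fintype.card n) *
        Fintype.card K ^ (Fintype.card l * Fintype.card m) *
        Nat.card {S : Matrix l n K // S.rank = r} := by
  rw [Nat.card_congr (equivSchurComplement r), Nat.card_prod, Nat.card_prod, Nat.card_prod,
    natCard_matrix, natCard_matrix, Nat.card_eq_fintype_card (α := K)]
  ring

theorem isUnit_iff_apply_default_ne_zero [Unique m] {A : Matrix m m K} :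
    IsUnit A ↔ A default default ≠ 0 := by
  rw [isUnit_iff_isUnit_det, det_unique, isUnit_iff_ne_zero]

end Matrix

theorem card_rank_eq_one_add_of_apply_zero_ne_zero (K : Type) [Field K] [Fintype K]
    (l m r : ℕ) :
    Nat.card {M : Matrix (Fin (1 + l)) (Fin (1 + m)) K // M.rank = 1 + r ∧ M 0 0 ≠ 0} =
      (Fintype.card K - 1) * Fintype.card K ^ (m + l) * mu K l m r := by
  have e : {M : Matrix (Fin (1 + l)) (Fin (1 + m)) K // M.rank = 1 + r ∧ M 0 0 ≠ 0} ≃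
      {N : Matrix (Fin 1 ⊕ Fin l) (Fin 1 ⊕ Fin m) K //
        N.rank = Fintype.card (Fin 1) + r ∧ IsUnit N.toBlocks₁₁} :=
    (reindex finSumFinEquiv finSumFinEquiv).symm.subtypeEquiv fun M =>
      and_congr (by simp) (by rw [isUnit_iff_apply_default_ne_zero]; rfl)
  rw [Nat.card_congr e, card_rank_eq_card_add_of_isUnit_toBlocks₁₁, card_GL_field]
  simp only [Fintype.card_fin, Fin.prod_univ_one, Fin.val_zero, pow_one, pow_zero, one_mul,
    mul_one, mu]
  ring

theorem stmt_4 (q t l m : ℕ)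
    (K : Type) [Field K] [Fintype K] (hK : Fintype.card K = q)
    (ht : 1 ≤ t) (htl : t ≤ l) (hlm : l ≤ m) :
    Nat.card {M : Matrix (Fin l) (Fin m) K //
        M.rank = t ∧ M ⟨0, by omega⟩ ⟨0, by omega⟩ ≠ 0} =
      (q - 1) * q ^ (l + m - 2) * mu K (l - 1) (m - 1) (t - 1) := by
  obtain ⟨l, rfl⟩ : ∃ l', l = 1 + l' := ⟨l - 1, by omega⟩
  obtain ⟨m, rfl⟩ : ∃ m', m = 1 + m' := ⟨m - 1, by omega⟩
  obtain ⟨r, rfl⟩ : ∃ r, t = 1 + r := ⟨t - 1, by omega⟩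
  subst hK
  rw [show 1 + l + (1 + m) - 2 = m + l by omega]
  simpa using card_rank_eq_one_add_of_apply_zero_ne_zero K l m r
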